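/- arXiv:1203.2775 — 2 statements merged into one kernel-verified Lean document; each statement's English description precedes it below -/
import Mathlib

section
/- Let $G_1,G_2$ be connected graphs and suppose $\delta=[i,j|k,l]=x_{ik}x_{jl}-x_{il}x_{jk}$ is a $2$-minor of $X$ with $i,j\in V(G_1)$ connected by a path in $G_1$ and $k,l\in V(G_2)$ connected by a path in $G_2$. Then there exists $N\geq 0$ such that $x^N\delta\in J_{G_1,G_2}$, where $x=\prod_{i,j}x_{ij}$. -/
open MvPolynomial

/-- The binomial edge ideal of a pair of graphs. -/
noncomputable def pairIdeal (K : Type) [Field K] {α β : Type}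
    (G1 : SimpleGraph α) (G2 : SimpleGraph β) : Ideal (MvPolynomial (α × β) K) :=
  Ideal.span {p | ∃ i j k l, G1.Adj i j ∧ G2.Adj k l ∧
    p = X (i, k) * X (j, l) - X (i, l) * X (j, k)}

/-!
The saturation `J : x^∞` is an ideal, and it absorbs every single variable: if `x_v f` lies in
it then so does `f`, because `x_v` divides `x`. So it suffices to show that `[i,j|k,l]` lies in
the saturation. Multiplying the minor by `x_{pk}` (resp. `x_{iq}`) splits it into two minors
along an edge `{i,p}` of `G₁` (resp. `{k,q}` of `G₂`), which lets us walk along a path in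
`G₁` and then along a path in `G₂`.
-/

namespace Ideal

variable {R : Type*} [CommRing R]

/-- The saturation `I : x^∞`. -/
def powSaturation (I : Ideal R) (x : R) : Ideal R where
  carrier := {f | ∃ N : ℕ, x ^ N * f ∈ I}
  zero_mem' := ⟨0, by simp⟩
  add_mem' := by
    rintro f g ⟨M, hM⟩ ⟨N, hN⟩
    refine ⟨M + N, ?_⟩
    have hsplit : x ^ (M + N) * (f + g) = x ^ N * (x ^ M * f) + x ^ M * (x ^ N * g) := by ring
    rw [hsplit]
    exact I.add_mem (I.mul_mem_left _ hM) (I.mul_mem_left _ hN)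
  smul_mem' := by
    rintro c f ⟨N, hN⟩
    refine ⟨N, ?_⟩
    rw [smul_eq_mul, mul_left_comm]
    exact I.mul_mem_left c hN

variable {I : Ideal R} {x f : R}

theorem mem_powSaturation : f ∈ I.powSaturation x ↔ ∃ N : ℕ, x ^ N * f ∈ I := Iff.rfl

theorem le_powSaturation (I : Ideal R) (x : R) : I ≤ I.powSaturation x :=
  fun f hf => ⟨0, by simpa using hf⟩

theorem mem_powSaturation_of_dvd_of_mul_mem {a : R} (ha : a ∣ x)
    (h : a * f ∈ I.powSaturation x) : f ∈ I.powSaturation x := by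
  obtain ⟨N, hN⟩ := h
  obtain ⟨b, rfl⟩ := ha
  refine ⟨N + 1, ?_⟩
  have hmul : (a * b) ^ (N + 1) * f = b * ((a * b) ^ N * (a * f)) := by ring
  rw [hmul]
  exact I.mul_mem_left b hN

end Ideal

section Minor

variable {R : Type*} [CommRing R] {α β : Type*}

/-- The 2-minor `[i,j|k,l]` of the generic matrix `(x_{ab})`. -/
noncomputable def minor (i j : α) (k l : β) : MvPolynomial (α × β) R :=
  X (i, k) * X (j, l) - X (i, l) * X (j, k)

theorem minor_self_left (i : α) (k l : β) : (minor i i k l : MvPolynomial (α × β) R) = 0 := by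
  unfold minor; ring

theorem minor_self_right (i j : α) (k : β) : (minor i j k k : MvPolynomial (α × β) R) = 0 := by
  unfold minor; ring

theorem X_mul_minor_eq_rows (i j p : α) (k l : β) :
    (X (p, k) * minor i j k l : MvPolynomial (α × β) R) =
      X (i, k) * minor p j k l + X (j, k) * minor i p k l := by
  unfold minor; ring

theorem X_mul_minor_eq_cols (i j : α) (k l q : β) :
    (X (i, q) * minor i j k l : MvPolynomial (α × β) R) =
      X (i, k) * minor i j q l + X (i, l) * minor i j k q := by
  unfold minor; ring

end Minor

section Saturation

variable {α β : Type} [Fintype α] [Fintype β]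

noncomputable def pairIdealSaturation (K : Type) [Field K] (G1 : SimpleGraph α)
    (G2 : SimpleGraph β) : Ideal (MvPolynomial (α × β) K) :=
  (pairIdeal K G1 G2).powSaturation (∏ p : α × β, X p)

variable {K : Type} [Field K] {G1 : SimpleGraph α} {G2 : SimpleGraph β}

theorem mem_pairIdealSaturation_of_X_mul_mem {f : MvPolynomial (α × β) K} (v : α × β)
    (h : X v * f ∈ pairIdealSaturation K G1 G2) :
    f ∈ pairIdealSaturation K G1 G2 :=
  Ideal.mem_powSaturation_of_dvd_of_mul_mem (Finset.dvd_prod_of_mem _ (Finset.mem_univ v)) h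

theorem minor_mem_of_adj {i j : α} {k l : β} (hij : G1.Adj i j) (hkl : G2.Adj k l) :
    minor i j k l ∈ pairIdealSaturation K G1 G2 :=
  Ideal.le_powSaturation _ _ (Ideal.subset_span ⟨i, j, k, l, hij, hkl, rfl⟩)

theorem minor_mem_of_walk_of_adj {i j : α} (w : G1.Walk i j) {k l : β} (hkl : G2.Adj k l) :
    minor i j k l ∈ pairIdealSaturation K G1 G2 := by
  induction w with
  | nil => simp [minor_self_left]
  | @cons i p j hip _ ih =>
    refine mem_pairIdealSaturation_of_X_mul_mem (p, k) ?_
    rw [X_mul_minor_eq_rows]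
    exact Ideal.add_mem _ (Ideal.mul_mem_left _ _ ih)
      (Ideal.mul_mem_left _ _ (minor_mem_of_adj hip hkl))

theorem minor_mem_of_reachable_of_walk {i j : α} (hij : G1.Reachable i j) {k l : β}
    (w : G2.Walk k l) : minor i j k l ∈ pairIdealSaturation K G1 G2 := by
  induction w with
  | nil => simp [minor_self_right]
  | @cons k q l hkq _ ih =>
    refine mem_pairIdealSaturation_of_X_mul_mem (i, q) ?_
    rw [X_mul_minor_eq_cols]
    exact Ideal.add_mem _ (Ideal.mul_mem_left _ _ ih)
      (Ideal.mul_mem_left _ _ (minor_mem_of_walk_of_adj hij.some hkq))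

end Saturation

theorem stmt5_general (K : Type) [Field K] (m n : ℕ)
    (G1 : SimpleGraph (Fin m)) (G2 : SimpleGraph (Fin n))
    (i j : Fin m) (k l : Fin n) (hij : G1.Reachable i j) (hkl : G2.Reachable k l) :
    ∃ N : ℕ, (∏ p : Fin m × Fin n, X p) ^ N *
        (X (i, k) * X (j, l) - X (i, l) * X (j, k) : MvPolynomial (Fin m × Fin n) K) ∈
      pairIdeal K G1 G2 :=
  Ideal.mem_powSaturation.mp (minor_mem_of_reachable_of_walk hij hkl.some)

/-- If `i` and `j` are joined by a path in `G₁` and `k` and `l` are joined by a path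
in `G₂`, then some power of the product `x` of all variables multiplies the minor
`δ = [i,j|k,l]` into `J_{G₁,G₂}`. -/
theorem stmt5 (K : Type) [Field K] (m n : ℕ)
    (G1 : SimpleGraph (Fin m)) (G2 : SimpleGraph (Fin n))
    (h1 : G1.Connected) (h2 : G2.Connected)
    (i j : Fin m) (k l : Fin n) (hij : G1.Reachable i j) (hkl : G2.Reachable k l) :
    ∃ N : ℕ, (∏ p : Fin m × Fin n, X p) ^ N *
        (X (i, k) * X (j, l) - X (i, l) * X (j, k) : MvPolynomial (Fin m × Fin n) K) ∈
      pairIdeal K G1 G2 :=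
  stmt5_general K m n G1 G2 i j k l hij hkl
end

section
/- Let $G_1,G_2$ be connected graphs on $[m]$ and $[n]$. The binomial edge ideal $J_{G_1,G_2}$ is a prime ideal if and only if both $G_1$ and $G_2$ are complete graphs. -/
/-!
Write `f_{ij,kl} = x_{ik} x_{jl} - x_{il} x_{jk}` and `J = J_{G₁,G₂}`. For complete graphs, `J`
is the ideal of all 2-minors and is the kernel of the Segre map `x_{ik} ↦ y_i z_k`, hence prime:
modulo the 2-minors a monomial depends only on its row and column margins (exchange cells by
`x_{il} x_{jk} ≡ x_{ik} x_{jl}`), and the Segre image of a monomial records exactly these margins,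
so the Segre map has a linear left inverse modulo `J`.

Conversely, if `G₁` is connected but not complete, a shortest walk between two non-adjacent
vertices starts with an induced path `i – t – j`. For an edge `{k, l}` of `G₂`,
`x_{tl} f_{ij,kl} = x_{jl} f_{it,kl} + x_{il} f_{tj,kl} ∈ J`, while `x_{tl} ∉ J` (evaluate at
all ones) and `f_{ij,kl} ∉ J` (evaluate at the 0/1 matrix supported on `(i, k), (j, l)`).
Transposing the variables exchanges the roles of `G₁` and `G₂`.
-/

open MvPolynomial

theorem MvPolynomial.prod_map_X {σ R : Type*} [CommSemiring R] [DecidableEq σ]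
    (s : Multiset σ) : (s.map X).prod = monomial (Multiset.toFinsupp s) (1 : R) := by
  induction s using Multiset.induction_on with
  | empty => simp
  | cons a s ih =>
    rw [Multiset.map_cons, Multiset.prod_cons, ih, ← Multiset.singleton_add,
      Multiset.toFinsupp_add, Multiset.toFinsupp_singleton, X, monomial_mul, one_mul]

namespace Multiset

variable {α β : Type*}

theorem filterMap_none (s : Multiset α) : s.filterMap (fun _ => (none : Option β)) = 0 :=
  Quot.inductionOn s fun l => congrArg _ l.filterMap_none

theorem filterMap_getLeft?_disjSum (u : Multiset α) (v : Multiset β) :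
    (u.disjSum v).filterMap Sum.getLeft? = u := by
  simp [disjSum, filterMap_add, filterMap_map, Function.comp_def, filterMap_none]

theorem filterMap_getRight?_disjSum (u : Multiset α) (v : Multiset β) :
    (u.disjSum v).filterMap Sum.getRight? = v := by
  simp [disjSum, filterMap_add, filterMap_map, Function.comp_def, filterMap_none]

noncomputable def cellsWithMargins (u : Multiset α) (v : Multiset β) : Multiset (α × β) :=
  u.toList.zip v.toList

theorem map_fst_cellsWithMargins {u : Multiset α} {v : Multiset β} (h : card u ≤ card v) :
    (cellsWithMargins u v).map Prod.fst = u := by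
  rw [cellsWithMargins, map_coe, List.map_fst_zip (by simpa using h), coe_toList]

theorem map_snd_cellsWithMargins {u : Multiset α} {v : Multiset β} (h : card v ≤ card u) :
    (cellsWithMargins u v).map Prod.snd = v := by
  rw [cellsWithMargins, map_coe, List.map_snd_zip (by simpa using h), coe_toList]

section Straightening

variable {M : Type*} [CommMonoid M] (f : α × β → M)

theorem exists_prod_map_eq_mul_of_map_eq_cons
    (hf : ∀ i j k l, f (i, k) * f (j, l) = f (i, l) * f (j, k))
    {t : Multiset (α × β)} {i : α} {k : β} {u : Multiset α} {v : Multiset β}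
    (h1 : t.map Prod.fst = i ::ₘ u) (h2 : t.map Prod.snd = k ::ₘ v) :
    ∃ t' : Multiset (α × β), t'.map Prod.fst = u ∧ t'.map Prod.snd = v ∧
      (t.map f).prod = f (i, k) * (t'.map f).prod := by
  obtain ⟨⟨i', l⟩, hil, rfl : i' = i⟩ := mem_map.mp (h1 ▸ mem_cons_self i u)
  obtain ⟨r, rfl⟩ := exists_cons_of_mem hil
  simp only [map_cons, prod_cons] at h1 h2 ⊢
  have hr1 := (cons_inj_right _).mp h1
  by_cases hlk : l = k
  · subst hlk
    exact ⟨r, hr1, (cons_inj_right _).mp h2, rfl⟩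
  -- otherwise trade the cells `(i, l), (j, k)` of `t` for `(i, k), (j, l)`
  obtain ⟨⟨j, k'⟩, hjk, rfl : k' = k⟩ :=
    mem_map.mp ((mem_cons.mp (h2.symm ▸ mem_cons_self k v)).resolve_left (Ne.symm hlk))
  obtain ⟨r', rfl⟩ := exists_cons_of_mem hjk
  simp only [map_cons, prod_cons] at hr1 h2 ⊢
  refine ⟨(j, l) ::ₘ r', by simpa using hr1, ?_, ?_⟩
  · rw [cons_swap] at h2
    simpa using (cons_inj_right _).mp h2
  · rw [← mul_assoc, hf, mul_assoc]
    simp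

theorem prod_map_eq_of_map_fst_eq_of_map_snd_eq
    (hf : ∀ i j k l, f (i, k) * f (j, l) = f (i, l) * f (j, k))
    {s t : Multiset (α × β)} (h1 : s.map Prod.fst = t.map Prod.fst)
    (h2 : s.map Prod.snd = t.map Prod.snd) : (s.map f).prod = (t.map f).prod := by
  induction s using Multiset.induction_on generalizing t with
  | empty =>
    rw [map_eq_zero.mp (h1.symm.trans (map_zero _))]
  | cons p s ih =>
    obtain ⟨t', ht1, ht2, ht⟩ :=
      exists_prod_map_eq_mul_of_map_eq_cons f hf (by rw [← h1, map_cons])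
        (by rw [← h2, map_cons])
    rw [ht, map_cons, prod_cons, ih ht1.symm ht2.symm]

end Straightening

end Multiset

noncomputable def segre (K : Type*) [CommRing K] (α β : Type*) :
    MvPolynomial (α × β) K →ₐ[K] MvPolynomial (α ⊕ β) K :=
  aeval fun p => X (Sum.inl p.1) * X (Sum.inr p.2)

theorem segre_prod_map_X (K : Type*) [CommRing K] {α β : Type*} (s : Multiset (α × β)) :
    segre K α β (s.map X).prod = (((s.map Prod.fst).disjSum (s.map Prod.snd)).map X).prod := by
  simp [segre, map_multiset_prod, Multiset.map_map, Multiset.prod_map_mul,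
    Multiset.disjSum]

section PairIdeal

variable (K : Type) [Field K] {α β : Type}

theorem pairIdeal_le_ker_aeval {S : Type*} [CommRing S] [Algebra K S]
    (G1 : SimpleGraph α) (G2 : SimpleGraph β) (f : α × β → S)
    (hf : ∀ i j k l, G1.Adj i j → G2.Adj k l → f (i, k) * f (j, l) = f (i, l) * f (j, k)) :
    pairIdeal K G1 G2 ≤ RingHom.ker (aeval f) := by
  rw [pairIdeal, Ideal.span_le]
  rintro p ⟨i, j, k, l, hij, hkl, rfl⟩
  simp [hf i j k l hij hkl]

theorem minor_mem_pairIdeal_top (i j : α) (k l : β) :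
    X (i, k) * X (j, l) - X (i, l) * X (j, k) ∈ pairIdeal K (⊤ : SimpleGraph α) ⊤ := by
  by_cases hij : i = j
  · simp [hij, mul_comm]
  by_cases hkl : k = l
  · simp [hkl]
  exact Ideal.subset_span ⟨i, j, k, l, hij, hkl, rfl⟩

theorem mk_prod_map_X_eq_of_map_fst_eq_of_map_snd_eq {s t : Multiset (α × β)}
    (h1 : s.map Prod.fst = t.map Prod.fst) (h2 : s.map Prod.snd = t.map Prod.snd) :
    Ideal.Quotient.mk (pairIdeal K ⊤ ⊤) (s.map X).prod =
      Ideal.Quotient.mk (pairIdeal K ⊤ ⊤) (t.map X).prod := by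
  have hminor (i j : α) (k l : β) :
      Ideal.Quotient.mk (pairIdeal K ⊤ ⊤) (X (i, k)) * Ideal.Quotient.mk _ (X (j, l)) =
        Ideal.Quotient.mk _ (X (i, l)) * Ideal.Quotient.mk _ (X (j, k)) := by
    rw [← map_mul, ← map_mul, Ideal.Quotient.eq]
    exact minor_mem_pairIdeal_top K i j k l
  simpa [map_multiset_prod, Multiset.map_map] using
    Multiset.prod_map_eq_of_map_fst_eq_of_map_snd_eq _ hminor h1 h2

theorem ker_segre_le : RingHom.ker (segre K α β) ≤ pairIdeal K ⊤ ⊤ := by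
  classical
  let J := pairIdeal K (⊤ : SimpleGraph α) (⊤ : SimpleGraph β)
  let straighten : MvPolynomial (α ⊕ β) K →ₗ[K] MvPolynomial (α × β) K ⧸ J :=
    (basisMonomials (α ⊕ β) K).constr K fun e => Ideal.Quotient.mk J
      ((Multiset.cellsWithMargins (e.toMultiset.filterMap Sum.getLeft?)
        (e.toMultiset.filterMap Sum.getRight?)).map X).prod
  have hinv :
      straighten ∘ₗ (segre K α β).toLinearMap = (Ideal.Quotient.mkₐ K J).toLinearMap := by
    refine (basisMonomials (α × β) K).ext fun d => ?_
    set s := Finsupp.toMultiset d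
    have hd : (basisMonomials (α × β) K) d = (s.map X).prod := by
      rw [coe_basisMonomials, prod_map_X, Finsupp.toMultiset_toFinsupp]
    have hcard : Multiset.card (s.map Prod.fst) = Multiset.card (s.map Prod.snd) := by simp
    rw [LinearMap.comp_apply, AlgHom.toLinearMap_apply, hd, segre_prod_map_X, prod_map_X,
      ← congrFun (coe_basisMonomials (α ⊕ β) K), Module.Basis.constr_basis,
      Multiset.toFinsupp_toMultiset, Multiset.filterMap_getLeft?_disjSum,
      Multiset.filterMap_getRight?_disjSum]
    exact mk_prod_map_X_eq_of_map_fst_eq_of_map_snd_eq K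
      (Multiset.map_fst_cellsWithMargins hcard.le) (Multiset.map_snd_cellsWithMargins hcard.ge)
  intro p hp
  have := LinearMap.congr_fun hinv p
  rw [LinearMap.comp_apply, AlgHom.toLinearMap_apply, RingHom.mem_ker.mp hp, map_zero] at this
  exact Ideal.Quotient.eq_zero_iff_mem.mp this.symm

theorem pairIdeal_top_eq_ker_segre : pairIdeal K ⊤ ⊤ = RingHom.ker (segre K α β) :=
  le_antisymm (pairIdeal_le_ker_aeval K ⊤ ⊤ _ fun _ _ _ _ _ _ => by ring) (ker_segre_le K)

theorem isPrime_pairIdeal_top :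
    (pairIdeal K (⊤ : SimpleGraph α) (⊤ : SimpleGraph β)).IsPrime :=
  pairIdeal_top_eq_ker_segre K ▸ RingHom.ker_isPrime _

variable (G1 : SimpleGraph α) (G2 : SimpleGraph β)

theorem X_notMem_pairIdeal (v : α × β) : X v ∉ pairIdeal K G1 G2 := fun h => by
  simpa using pairIdeal_le_ker_aeval K G1 G2 (fun _ => (1 : K)) (fun _ _ _ _ _ _ => rfl) h

theorem minor_notMem_pairIdeal {i j : α} {k l : β} (hij : i ≠ j) (hkl : k ≠ l)
    (hadj : ¬(G1.Adj i j ∧ G2.Adj k l)) :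
    X (i, k) * X (j, l) - X (i, l) * X (j, k) ∉ pairIdeal K G1 G2 := by
  classical
  -- a generator can only fill both cells `(i, k), (j, l)` if `i ~ j` and `k ~ l`
  let f : α × β → K := fun v => if v = (i, k) ∨ v = (j, l) then 1 else 0
  have hf : ∀ a b c d, G1.Adj a b → G2.Adj c d →
      f (a, c) * f (b, d) = f (a, d) * f (b, c) := by
    intro a b c d hab hcd
    simp only [f]
    grind [SimpleGraph.Adj.ne, SimpleGraph.Adj.symm]
  intro h
  have := pairIdeal_le_ker_aeval K G1 G2 f hf h
  simp [f, hij, hkl, hkl.symm] at this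

theorem not_isPrime_pairIdeal_of_adj_of_adj {i t j : α} {k l : β} (hit : G1.Adj i t)
    (htj : G1.Adj t j) (hij : ¬G1.Adj i j) (hne : i ≠ j) (hkl : G2.Adj k l) :
    ¬(pairIdeal K G1 G2).IsPrime := by
  intro hp
  have hmul : X (t, l) * (X (i, k) * X (j, l) - X (i, l) * X (j, k)) ∈ pairIdeal K G1 G2 := by
    have e : (X (t, l) : MvPolynomial (α × β) K) * (X (i, k) * X (j, l) - X (i, l) * X (j, k)) =
        X (j, l) * (X (i, k) * X (t, l) - X (i, l) * X (t, k)) +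
          X (i, l) * (X (t, k) * X (j, l) - X (t, l) * X (j, k)) := by ring
    rw [e]
    exact add_mem (Ideal.mul_mem_left _ _ (Ideal.subset_span ⟨i, t, k, l, hit, hkl, rfl⟩))
      (Ideal.mul_mem_left _ _ (Ideal.subset_span ⟨t, j, k, l, htj, hkl, rfl⟩))
  exact (hp.mem_or_mem hmul).elim (X_notMem_pairIdeal K G1 G2 _)
    (minor_notMem_pairIdeal K G1 G2 hne hkl.ne fun h => hij h.1)

theorem eq_top_of_isPrime_pairIdeal (hp : (pairIdeal K G1 G2).IsPrime) (hG1 : G1.Connected)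
    {k l : β} (hkl : G2.Adj k l) : G1 = ⊤ := by
  by_contra hne
  obtain ⟨a, b, hab, hnadj⟩ := SimpleGraph.ne_top_iff_exists_not_adj.mp hne
  obtain ⟨p, hlen⟩ := hG1.exists_walk_length_eq_dist a b
  have hdist : 1 < G1.dist a b := by
    have h0 : G1.dist a b ≠ 0 :=
      SimpleGraph.dist_ne_zero_iff_ne_and_reachable.mpr ⟨hab, hG1 a b⟩
    have h1 : G1.dist a b ≠ 1 := fun h => hnadj (SimpleGraph.dist_eq_one_iff_adj.mp h)
    omega
  obtain ⟨i, t, j, hit, htj, hij, hne⟩ := p.exists_adj_adj_not_adj_ne hlen hdist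
  exact not_isPrime_pairIdeal_of_adj_of_adj K G1 G2 hit htj hij hne hkl hp

theorem map_renameEquiv_prodComm_pairIdeal :
    Ideal.map (renameEquiv K (Equiv.prodComm α β)) (pairIdeal K G1 G2) = pairIdeal K G2 G1 := by
  rw [pairIdeal, pairIdeal, Ideal.map_span]
  congr 1
  ext p
  constructor
  · rintro ⟨_, ⟨i, j, k, l, hij, hkl, rfl⟩, rfl⟩
    exact ⟨k, l, i, j, hkl, hij, by simp; ring⟩
  · rintro ⟨k, l, i, j, hkl, hij, rfl⟩
    exact ⟨_, ⟨i, j, k, l, hij, hkl, rfl⟩, by simp; ring⟩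

theorem isPrime_pairIdeal_swap (hp : (pairIdeal K G1 G2).IsPrime) : (pairIdeal K G2 G1).IsPrime :=
  map_renameEquiv_prodComm_pairIdeal K G1 G2 ▸ Ideal.map_isPrime_of_equiv _

end PairIdeal

/-- For connected graphs `G₁, G₂` (each with at least 2 vertices), `J_{G₁,G₂}` is a
prime ideal if and only if both graphs are complete. -/
theorem stmt6 (K : Type) [Field K] (m n : ℕ) (hm : 2 ≤ m) (hn : 2 ≤ n)
    (G1 : SimpleGraph (Fin m)) (G2 : SimpleGraph (Fin n))
    (h1 : G1.Connected) (h2 : G2.Connected) :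
    (pairIdeal K G1 G2).IsPrime ↔ (G1 = ⊤ ∧ G2 = ⊤) := by
  refine ⟨fun hp => ?_, fun ⟨hG1, hG2⟩ => hG1 ▸ hG2 ▸ isPrime_pairIdeal_top K⟩
  have : Nontrivial (Fin m) := Fin.nontrivial_iff_two_le.mpr hm
  have : Nontrivial (Fin n) := Fin.nontrivial_iff_two_le.mpr hn
  obtain ⟨i, hi⟩ := h1.preconnected.exists_adj_of_nontrivial ⟨0, by omega⟩
  obtain ⟨k, hk⟩ := h2.preconnected.exists_adj_of_nontrivial ⟨0, by omega⟩
  exact ⟨eq_top_of_isPrime_pairIdeal K G1 G2 hp h1 hk,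
    eq_top_of_isPrime_pairIdeal K G2 G1 (isPrime_pairIdeal_swap K G1 G2 hp) h2 hi⟩
end
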